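/- Let A = (0,0), O = (1,0), r > 0 with r ≠ 1, let R be a point on the circle of center O radius r with R not on the x-axis, and let B = (1 − r², 0). Let E and γ > 0 be the center and radius of the circle through A, B, R tangent at R to line RO (which exists by the inversion lemma). If M ≠ R is any point on this circle and ∠AMR, ∠BMR denote unoriented inscribed angles, then by the law of sines in the circle of radius γ, sin ∠AMR / sin ∠BMR = ‖R−A‖/‖R−B‖ = ‖A−O‖/r = 1/r. -/

import Mathlib

set_option maxHeartbeats 800000

open EuclideanGeometry Real
open scoped RealInnerProductSpace

noncomputable def pt (a b : ℝ) : EuclideanSpace ℝ (Fin 2) := WithLp.toLp 2 ![a, b]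

lemma sin_angle_abs (θ : Real.Angle) : Real.sin |θ.toReal| = |θ.sin| := by
  have hs : θ.sin = Real.sin θ.toReal := by
    conv_lhs => rw [← θ.coe_toReal]
    rw [Real.Angle.sin_coe]
  rw [hs]
  rcases le_or_gt 0 θ.toReal with h | h
  · rw [abs_of_nonneg h, abs_of_nonneg (Real.sin_nonneg_of_nonneg_of_le_pi h θ.toReal_le_pi)]
  · rw [abs_of_neg h, Real.sin_neg,
      abs_of_nonpos (Real.sin_nonpos_of_nonpos_of_neg_pi_le h.le θ.neg_pi_lt_toReal.le)]

lemma norm_sq_coords (v : EuclideanSpace ℝ (Fin 2)) : ‖v‖ ^ 2 = v 0 ^ 2 + v 1 ^ 2 := by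
  rw [EuclideanSpace.norm_eq]
  rw [Real.sq_sqrt (by positivity)]
  simp [Fin.sum_univ_two, sq_abs]

theorem refraction_sine_ratio (r : ℝ) (hr : 0 < r) (hr1 : r ≠ 1)
    (A O B : EuclideanSpace ℝ (Fin 2))
    (hA : A = pt 0 0) (hO : O = pt 1 0) (hB : B = pt (1 - r ^ 2) 0)
    (R : EuclideanSpace ℝ (Fin 2)) (hR : ‖R - O‖ = r) (hRx : R 1 ≠ 0)
    (E : EuclideanSpace ℝ (Fin 2)) (γ : ℝ) (hγ : 0 < γ)
    (hAE : ‖A - E‖ = γ) (hRE : ‖R - E‖ = γ) (hBE : ‖B - E‖ = γ)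
    (htang : ⟪R - O, R - E⟫ = 0)
    (M : EuclideanSpace ℝ (Fin 2)) (hME : ‖M - E‖ = γ)
    (hMR : M ≠ R) (hMA : M ≠ A) (hMB : M ≠ B) :
    sin (∠ A M R) / sin (∠ B M R) = ‖R - A‖ / ‖R - B‖ ∧
    ‖R - A‖ / ‖R - B‖ = ‖A - O‖ / r ∧
    ‖A - O‖ / r = 1 / r := by
  have hA1 : A 1 = 0 := by simp [hA, pt]
  have hB1 : B 1 = 0 := by simp [hB, pt]
  have hRA : R ≠ A := fun h => hRx (by rw [h, hA1])
  have hRB : R ≠ B := fun h => hRx (by rw [h, hB1])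
  -- coordinate computations
  have hRO2 : (R 0 - 1) ^ 2 + R 1 ^ 2 = r ^ 2 := by
    have := norm_sq_coords (R - O)
    rw [hR] at this
    simpa [hO, pt] using this.symm
  have hRA2 : ‖R - A‖ ^ 2 = R 0 ^ 2 + R 1 ^ 2 := by
    simpa [hA, pt] using norm_sq_coords (R - A)
  have hRB2 : ‖R - B‖ ^ 2 = (R 0 - (1 - r ^ 2)) ^ 2 + R 1 ^ 2 := by
    simpa [hB, pt] using norm_sq_coords (R - B)
  have hRApos : 0 < ‖R - A‖ := by
    rw [norm_pos_iff, sub_ne_zero]; exact hRA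
  have hkey : ‖R - B‖ = r * ‖R - A‖ := by
    have hsq : ‖R - B‖ ^ 2 = (r * ‖R - A‖) ^ 2 := by
      rw [hRB2, mul_pow, hRA2]; nlinarith [hRO2]
    rw [← Real.sqrt_sq (norm_nonneg (R - B)), hsq,
      Real.sqrt_sq (by positivity)]
  have hAO : ‖A - O‖ = 1 := by
    have := norm_sq_coords (A - O)
    have h1 : ‖A - O‖ ^ 2 = 1 := by simpa [hA, hO, pt] using this
    nlinarith [norm_nonneg (A - O)]
  have hratio : ‖R - A‖ / ‖R - B‖ = 1 / r := by
    rw [hkey, mul_comm, div_mul_cancel_left₀ hRApos.ne', one_div]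
  refine ⟨?_, by rw [hratio, hAO], by rw [hAO]⟩
  -- law of sines part
  haveI : Fact (Module.finrank ℝ (EuclideanSpace ℝ (Fin 2)) = 2) := ⟨finrank_euclideanSpace_fin⟩
  haveI : Module.Oriented ℝ (EuclideanSpace ℝ (Fin 2)) (Fin 2) :=
    ⟨(EuclideanSpace.basisFun (Fin 2) ℝ).toBasis.orientation⟩
  set s : EuclideanGeometry.Sphere (EuclideanSpace ℝ (Fin 2)) := ⟨E, γ⟩ with hs
  have hmem : ∀ p : EuclideanSpace ℝ (Fin 2), ‖p - E‖ = γ → p ∈ s := fun p hp => by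
    simp [hs, EuclideanGeometry.mem_sphere, dist_eq_norm, hp]
  have hAs := hmem A hAE
  have hBs := hmem B hBE
  have hRs := hmem R hRE
  have hMs := hmem M hME
  have h1 := EuclideanGeometry.Sphere.dist_div_sin_oangle_eq_two_mul_radius hAs hMs hRs
    (Ne.symm hMA) hRA.symm hMR
  have h2 := EuclideanGeometry.Sphere.dist_div_sin_oangle_eq_two_mul_radius hBs hMs hRs
    (Ne.symm hMB) hRB.symm hMR
  have hγ2 : (0:ℝ) < 2 * s.radius := by simp [hs]; linarith
  have hdA : dist A R ≠ 0 := dist_ne_zero.2 hRA.symm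
  have hdB : dist B R ≠ 0 := dist_ne_zero.2 hRB.symm
  have hsinA : |Real.Angle.sin (∡ A M R)| = dist A R / (2 * s.radius) := by
    have hne : |Real.Angle.sin (∡ A M R)| ≠ 0 := by
      intro h0; rw [h0, div_zero] at h1; linarith
    rw [div_eq_iff hne] at h1
    rw [eq_div_iff (ne_of_gt hγ2)]
    linarith
  have hsinB : |Real.Angle.sin (∡ B M R)| = dist B R / (2 * s.radius) := by
    have hne : |Real.Angle.sin (∡ B M R)| ≠ 0 := by
      intro h0; rw [h0, div_zero] at h2; linarith
    rw [div_eq_iff hne] at h2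
    rw [eq_div_iff (ne_of_gt hγ2)]
    linarith
  have hangA : Real.sin (∠ A M R) = |Real.Angle.sin (∡ A M R)| := by
    rw [EuclideanGeometry.angle_eq_abs_oangle_toReal hMA.symm (Ne.symm hMR), sin_angle_abs]
  have hangB : Real.sin (∠ B M R) = |Real.Angle.sin (∡ B M R)| := by
    rw [EuclideanGeometry.angle_eq_abs_oangle_toReal hMB.symm (Ne.symm hMR), sin_angle_abs]
  rw [hangA, hangB, hsinA, hsinB, dist_eq_norm, dist_eq_norm,
    ← norm_sub_rev A R, ← norm_sub_rev B R]
  have hRBne : ‖R - B‖ ≠ 0 := by rw [hkey]; positivity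
  field_simp
  rw [mul_comm s.radius, mul_div_mul_right _ _ (ne_of_gt (by linarith : (0:ℝ) < s.radius))]
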